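/- arXiv:2210.14832 — 2 statements merged into one kernel-verified Lean document; each statement's English description precedes it below -/
import Mathlib

section
/- Let F be a presheaf of abelian groups on a site that is a Nisnevich sheaf, and suppose that on a scheme X with closed subscheme Z and open complement U (and similarly after base change), one has direct sum decompositions C(X) = C(Z) ⊕ C(U) of the associated groups compatible with restrictions. Then the presheaf U ↦ C(U) on the small Nisnevich site of X satisfies the sheaf condition for every Nisnevich distinguished square. -/
/-!
In the coordinates `C(X) ≅ C(Z) × C(U)` and `C(V) ≅ C(Z) × C(U_V)` the square becomes
`rU = snd`, `ρV = snd` and `rV = id × ρU`, and `Z × U` is visibly the fibre product of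
`ρU : U → U_V` and `snd : Z × U_V → U_V`.
-/

namespace DecomposedSquare

variable {X U V W Z : Type*} {rU : X → U} {rV : X → V} {ρU : U → W} {ρV : V → W}
  {eX : X ≃ Z × U} {eV : V ≃ Z × W}

theorem restrict_symm (hXU : ∀ x, (eX x).2 = rU x) (p : Z × U) : rU (eX.symm p) = p.2 := by
  rw [← hXU, eX.apply_symm_apply]

theorem restrict_symm_eq_prodMap (hcomm : ∀ x, ρU (rU x) = ρV (rV x))
    (hXU : ∀ x, (eX x).2 = rU x) (hVU : ∀ y, (eV y).2 = ρV y)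
    (hZ : ∀ x, (eV (rV x)).1 = (eX x).1) (p : Z × U) :
    eV (rV (eX.symm p)) = Prod.map id ρU p :=
  Prod.ext (by rw [hZ, eX.apply_symm_apply]; rfl)
    (by rw [hVU, ← hcomm, restrict_symm hXU]; rfl)

theorem existsUnique_restrict_eq (hcomm : ∀ x, ρU (rU x) = ρV (rV x))
    (hXU : ∀ x, (eX x).2 = rU x) (hVU : ∀ y, (eV y).2 = ρV y)
    (hZ : ∀ x, (eV (rV x)).1 = (eX x).1) (a : U) (b : V) (hab : ρU a = ρV b) :
    ∃! x, rU x = a ∧ rV x = b := by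
  refine ⟨eX.symm ((eV b).1, a), ⟨restrict_symm hXU _, eV.injective ?_⟩, ?_⟩
  · rw [restrict_symm_eq_prodMap hcomm hXU hVU hZ, Prod.map_apply, id, hab, ← hVU]
  · rintro y ⟨rfl, rfl⟩
    rw [eX.eq_symm_apply, hZ, ← hXU]

end DecomposedSquare

theorem nisnevich_sheaf_condition_of_decompositions
    {CX CU CV CUV CZ : Type*}
    [AddCommGroup CX] [AddCommGroup CU] [AddCommGroup CV] [AddCommGroup CUV] [AddCommGroup CZ]
    (rU : CX →+ CU) (rV : CX →+ CV) (ρU : CU →+ CUV) (ρV : CV →+ CUV)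
    (hcomm : ∀ x : CX, ρU (rU x) = ρV (rV x))
    (eX : CX ≃+ CZ × CU) (eV : CV ≃+ CZ × CUV)
    (hXU : ∀ x : CX, (eX x).2 = rU x)
    (hVU : ∀ y : CV, (eV y).2 = ρV y)
    (hZ : ∀ x : CX, (eV (rV x)).1 = (eX x).1) :
    ∀ (a : CU) (b : CV), ρU a = ρV b → ∃! x : CX, rU x = a ∧ rV x = b :=
  DecomposedSquare.existsUnique_restrict_eq (eX := eX.toEquiv) (eV := eV.toEquiv)
    hcomm hXU hVU hZ
end

section
/- Let X be an integral scheme, Z a divisor on X (closed everywhere of codimension 1), assume X universally catenary and Noetherian with a dimension function δ. If t is a point of X∖Z of codimension p and z ∈ Z is a specialization of t, then δ(z) ≤ δ(t) − 1; consequently z has codimension at least p in Z, and for any closed subscheme T of X∖Z of codimension ≥ p, the intersection of the Zariski closure of T in X with Z has codimension ≥ p in Z. -/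
/-!
STATEMENT 17: Let `X` be an integral (irreducible, with generic point `ξ`) universally
catenary Noetherian scheme with a dimension function `δ`, and `Z ⊆ X` a divisor (a closed
subset).  If `t` is a point of `X ∖ Z` of codimension `p` and `z ∈ Z` is a specialization of
`t`, then `δ(z) ≤ δ(t) − 1`; consequently `z` has codimension at least `p` in `Z`, and for any
closed subscheme `T` of `X ∖ Z` of codimension `≥ p`, the intersection of the Zariski closure
of `T` in `X` with `Z` has codimension `≥ p` in `Z`.

We work with the underlying topological space.  `δ` being a dimension function is expressed by
`hδ`: immediate specializations drop `δ` by exactly `1`.  The (universally catenary,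
Noetherian) hypothesis is used through `hchain`: every nontrivial specialization is connected
by a finite nonempty chain of immediate specializations.  Codimension of a point `x` is
measured as `δ(ξ) − δ(x)` in `X`, and as `(δ(ξ) − 1) − δ(x)` in the divisor `Z` (whose generic
points have `δ`-value `δ(ξ) − 1`).  "Closed subscheme `T` of `X ∖ Z`" is expressed by
`T = closure T ∩ Zᶜ`.
-/

/-- `y` is a specialization of `x`. -/
def SpecializesTo {X : Type*} [TopologicalSpace X] (x y : X) : Prop :=
  y ∈ closure ({x} : Set X)

/-- `y` is an immediate specialization of `x`. -/
def ImmediateSpecialization {X : Type*} [TopologicalSpace X] (x y : X) : Prop :=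
  SpecializesTo x y ∧ x ≠ y ∧ ∀ z, SpecializesTo x z → SpecializesTo z y → z = x ∨ z = y

/-!
Along a chain of `n ≥ 1` immediate specializations a dimension function drops by exactly `n`,
so it drops by at least one along every proper specialization. A point `z ∈ closure T ∩ Z` lies
in the closure of an irreducible piece `A` of the Noetherian set `T`; the generic point `g` of
`closure A` lies in the open set `Zᶜ` because `A` does, hence `g ∈ T`, and the drop of `δ` from
`g` to `z` turns the codimension bound at `g` into the one at `z`.
-/

theorem Fin.apply_eq_apply_zero_sub_val {n : ℕ} {f : Fin (n + 1) → ℤ}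
    (hf : ∀ i : Fin n, f i.succ = f i.castSucc - 1) (i : Fin (n + 1)) :
    f i = f 0 - i := by
  induction i using Fin.induction with
  | zero => simp
  | succ i ih =>
    rw [hf, ih, Fin.val_succ, Fin.val_castSucc]
    push_cast
    ring

theorem le_sub_one_of_specializesTo {X : Type*} [TopologicalSpace X] {δ : X → ℤ}
    (hδ : ∀ x y, ImmediateSpecialization x y → δ y = δ x - 1)
    (hchain : ∀ x y, SpecializesTo x y → x ≠ y →
      ∃ (n : ℕ) (c : Fin (n + 1) → X), 0 < n ∧ c 0 = x ∧ c (Fin.last n) = y ∧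
        ∀ i : Fin n, ImmediateSpecialization (c i.castSucc) (c i.succ))
    {x y : X} (hxy : SpecializesTo x y) (hne : x ≠ y) :
    δ y ≤ δ x - 1 := by
  obtain ⟨n, c, hn, rfl, rfl, hc⟩ := hchain x y hxy hne
  have hlast := Fin.apply_eq_apply_zero_sub_val (f := δ ∘ c)
    (fun i => hδ _ _ (hc i)) (Fin.last n)
  simp only [Function.comp_apply, Fin.val_last] at hlast
  omega

theorem TopologicalSpace.NoetherianSpace.exists_isIrreducible_subset_mem_closure
    {X : Type*} [TopologicalSpace X] [TopologicalSpace.NoetherianSpace X]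
    {T : Set X} {z : X} (hz : z ∈ closure T) :
    ∃ A ⊆ T, IsIrreducible A ∧ z ∈ closure A := by
  have hT : T = ⋃ C ∈ irreducibleComponents T, ((↑) '' C : Set X) := by
    rw [← Set.image_iUnion₂, ← Set.sUnion_eq_biUnion, sUnion_irreducibleComponents,
      Set.image_univ, Subtype.range_coe]
  rw [hT, NoetherianSpace.finite_irreducibleComponents.closure_biUnion] at hz
  obtain ⟨C, hC, hzC⟩ := Set.mem_iUnion₂.1 hz
  exact ⟨(↑) '' C, Subtype.coe_image_subset T C,
    hC.1.image _ continuous_subtype_val.continuousOn, hzC⟩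

theorem exists_specializes_mem_inter_of_mem_closure {X : Type*} [TopologicalSpace X]
    [TopologicalSpace.NoetherianSpace X] [QuasiSober X] {T U : Set X} {z : X}
    (hU : IsOpen U) (hTU : T ⊆ U) (hz : z ∈ closure T) :
    ∃ g ∈ closure T ∩ U, g ⤳ z := by
  obtain ⟨A, hAT, hA, hzA⟩ :=
    TopologicalSpace.NoetherianSpace.exists_isIrreducible_subset_mem_closure hz
  have hgA : closure {hA.genericPoint} = closure A := hA.genericPoint_closure_eq
  obtain ⟨a, haA⟩ := hA.nonempty
  have hga : hA.genericPoint ⤳ a := specializes_iff_mem_closure.2 (hgA ▸ subset_closure haA)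
  refine ⟨hA.genericPoint, ⟨?_, hga.mem_open hU (hTU (hAT haA))⟩,
    specializes_iff_mem_closure.2 (hgA ▸ hzA)⟩
  exact closure_mono hAT (hgA ▸ subset_closure rfl)

theorem dimension_function_divisor_codim_general
    {X : Type*} [TopologicalSpace X] [TopologicalSpace.NoetherianSpace X] [QuasiSober X]
    (δ : X → ℤ)
    (hδ : ∀ x y, ImmediateSpecialization x y → δ y = δ x - 1)
    (hchain : ∀ x y, SpecializesTo x y → x ≠ y →
      ∃ (n : ℕ) (c : Fin (n + 1) → X), 0 < n ∧ c 0 = x ∧ c (Fin.last n) = y ∧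
        ∀ i : Fin n, ImmediateSpecialization (c i.castSucc) (c i.succ))
    (ξ : X)
    (Z : Set X) (hZ : IsClosed Z)
    (p : ℤ) (t : X) (ht : t ∉ Z) (htp : δ ξ - δ t = p) :
    (∀ z, SpecializesTo t z → t ≠ z → δ z ≤ δ t - 1) ∧
    (∀ z ∈ Z, SpecializesTo t z → p ≤ (δ ξ - 1) - δ z) ∧
    (∀ T : Set X, T = closure T ∩ Zᶜ → (∀ t' ∈ T, p ≤ δ ξ - δ t') →
      ∀ z ∈ closure T ∩ Z, p ≤ (δ ξ - 1) - δ z) := by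
  have drop {x y : X} : SpecializesTo x y → x ≠ y → δ y ≤ δ x - 1 :=
    le_sub_one_of_specializesTo hδ hchain
  refine ⟨fun z => drop, fun z hzZ htz => ?_, fun T hT hTp z ⟨hzT, hzZ⟩ => ?_⟩
  · have := drop htz (ne_of_mem_of_not_mem hzZ ht).symm
    omega
  · have hTZ : T ⊆ Zᶜ := hT ▸ Set.inter_subset_right
    obtain ⟨g, hg, hgz⟩ := exists_specializes_mem_inter_of_mem_closure hZ.isOpen_compl hTZ hzT
    have hdrop := drop (specializes_iff_mem_closure.1 hgz) (ne_of_mem_of_not_mem hzZ hg.2).symm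
    have hcodim := hTp g (hT ▸ hg)
    omega

theorem dimension_function_divisor_codim
    {X : Type*} [TopologicalSpace X] [TopologicalSpace.NoetherianSpace X] [QuasiSober X]
    (δ : X → ℤ)
    (hδ : ∀ x y, ImmediateSpecialization x y → δ y = δ x - 1)
    (hchain : ∀ x y, SpecializesTo x y → x ≠ y →
      ∃ (n : ℕ) (c : Fin (n + 1) → X), 0 < n ∧ c 0 = x ∧ c (Fin.last n) = y ∧
        ∀ i : Fin n, ImmediateSpecialization (c i.castSucc) (c i.succ))
    (ξ : X) (hξ : closure ({ξ} : Set X) = Set.univ)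
    (Z : Set X) (hZ : IsClosed Z)
    (p : ℤ) (t : X) (ht : t ∉ Z) (htp : δ ξ - δ t = p) :
    (∀ z, SpecializesTo t z → t ≠ z → δ z ≤ δ t - 1) ∧
    (∀ z ∈ Z, SpecializesTo t z → p ≤ (δ ξ - 1) - δ z) ∧
    (∀ T : Set X, T = closure T ∩ Zᶜ → (∀ t' ∈ T, p ≤ δ ξ - δ t') →
      ∀ z ∈ closure T ∩ Z, p ≤ (δ ξ - 1) - δ z) :=
  dimension_function_divisor_codim_general δ hδ hchain ξ Z hZ p t ht htp
end
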